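/- arXiv:2602.01682 — 2 statements merged into one kernel-verified Lean document; each statement's English description precedes it below -/
import Mathlib

section
/- Let X ⊆ ℤ^d be an M-convex set, w ∈ ℝ^d, and x ∈ X. If w(i) ≥ w(j) for all indices i, j ∈ [d] such that x - e_i + e_j ∈ X, then x maximizes ⟨w, ·⟩ over X. -/
open scoped BigOperators

/-- The `i`-th standard basis vector in `ℤ^d`. -/
def stdE {d : ℕ} (i : Fin d) : Fin d → ℤ := Pi.single i 1

/-- A nonempty set `X ⊆ ℤ^d` is M-convex if it satisfies the exchange property. -/
def MConvex {d : ℕ} (X : Set (Fin d → ℤ)) : Prop :=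
  X.Nonempty ∧ ∀ x ∈ X, ∀ y ∈ X, ∀ i : Fin d, y i < x i →
    ∃ j : Fin d, x j < y j ∧ x - stdE i + stdE j ∈ X ∧ y + stdE i - stdE j ∈ X

/-- The linear objective `⟨w, x⟩`. -/
def obj {d : ℕ} (w : Fin d → ℝ) (x : Fin d → ℤ) : ℝ := ∑ i, w i * (x i : ℝ)

theorem mconvex_local_to_global_opt {d : ℕ} (X : Set (Fin d → ℤ)) (hX : MConvex X)
    (w : Fin d → ℝ) (x : Fin d → ℤ) (hx : x ∈ X)
    (h : ∀ i j : Fin d, x - stdE i + stdE j ∈ X → w j ≤ w i) :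
    ∀ y ∈ X, obj w y ≤ obj w x := by
  suffices H : ∀ n : ℕ, ∀ y ∈ X, (∑ k, (x k - y k).natAbs) = n → obj w y ≤ obj w x by
    intro y hy; exact H _ y hy rfl
  intro n
  induction n using Nat.strong_induction_on with
  | _ n IH =>
    intro y hy hn
    by_cases hxy : y = x
    · subst hxy; exact le_refl _
    · -- find i with y i < x i
      have hi : ∃ i, y i < x i := by
        by_contra hc
        push_neg at hc
        have hne : ∃ i, x i < y i := by
          by_contra hc2
          push_neg at hc2
          exact hxy (funext fun k => le_antisymm (hc2 k) (hc k))
        obtain ⟨i, hii⟩ := hne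
        obtain ⟨j, hjj, -, -⟩ := hX.2 y hy x hx i hii
        exact absurd hjj (not_lt.2 (hc j))
      obtain ⟨i, hii⟩ := hi
      obtain ⟨j, hjj, hx', hy'⟩ := hX.2 x hx y hy i hii
      have hij : i ≠ j := by rintro rfl; omega
      set y2 : Fin d → ℤ := y + stdE i - stdE j with hy2def
      have hy2k : ∀ k, y2 k = y k + (if k = i then 1 else 0) - (if k = j then 1 else 0) := by
        intro k; simp [hy2def, stdE, Pi.single_apply]
      have hwij : w j ≤ w i := h i j hx'
      have hobj : obj w y2 = obj w y + w i - w j := by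
        unfold obj
        have hk : ∀ k ∈ Finset.univ, w k * ((y2 k : ℤ) : ℝ) =
            w k * (y k : ℝ) + (if k = i then w k else 0) - (if k = j then w k else 0) := by
          intro k _
          rw [hy2k k]
          split_ifs <;> push_cast <;> ring
        rw [Finset.sum_congr rfl hk]
        simp [Finset.sum_add_distrib, Finset.sum_sub_distrib, Finset.sum_ite_eq']
      have hlt : (∑ k, (x k - y2 k).natAbs) < n := by
        rw [← hn]
        apply Finset.sum_lt_sum
        · intro k _
          rw [hy2k k]
          by_cases h1 : k = i
          · subst h1; rw [if_pos rfl, if_neg hij]; omega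
          · by_cases h2 : k = j
            · subst h2; rw [if_neg h1, if_pos rfl]; omega
            · rw [if_neg h1, if_neg h2]; omega
        · refine ⟨i, Finset.mem_univ i, ?_⟩
          rw [hy2k i, if_pos rfl, if_neg hij]
          omega
      have := IH _ hlt y2 hy' rfl
      linarith [hobj ▸ this]
end

section
/- Contrapositive corruption-detection lemma: Let w* ∈ ℝ^d have pairwise distinct components, and for s = 1,...,n let X_s ⊆ ℤ^d be M-convex sets with points x_s ∈ X_s. Define A = ⋃_{s=1}^n {(i, j) : i ≠ j, x_s - e_i + e_j ∈ X_s}. If the directed graph ([d], A) contains a directed cycle, then at least one x_s is not a maximizer of ⟨w*, ·⟩ over X_s. -/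
open scoped BigOperators

/-- The directed graph `([d], A)` has a directed cycle. -/
def HasCycle {d : ℕ} (A : Set (Fin d × Fin d)) : Prop :=
  ∃ (k : ℕ) (c : ℕ → Fin d), 0 < k ∧ c k = c 0 ∧ ∀ l < k, (c l, c (l + 1)) ∈ A


lemma obj_move {d : ℕ} (w : Fin d → ℝ) (x : Fin d → ℤ) (i j : Fin d) :
    obj w (x - stdE i + stdE j) = obj w x - w i + w j := by
  unfold obj
  have h : ∀ m : Fin d, w m * (((x - stdE i + stdE j) m : ℤ) : ℝ)
      = w m * (x m : ℝ) - w m * (if m = i then 1 else 0)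
        + w m * (if m = j then 1 else 0) := by
    intro m
    simp only [stdE, Pi.add_apply, Pi.sub_apply, Pi.single_apply]
    split <;> split <;> push_cast <;> ring
  rw [Finset.sum_congr rfl fun m _ => h m, Finset.sum_add_distrib,
    Finset.sum_sub_distrib]
  simp [Finset.sum_ite_eq']

theorem cycle_detects_corruption {d n : ℕ} (w : Fin d → ℝ)
    (hw : Function.Injective w)
    (X : Fin n → Set (Fin d → ℤ)) (x : Fin n → (Fin d → ℤ))
    (hM : ∀ s, MConvex (X s)) (hmem : ∀ s, x s ∈ X s)
    (hcyc : HasCycle (⋃ s : Fin n,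
      {p : Fin d × Fin d | p.1 ≠ p.2 ∧ x s - stdE p.1 + stdE p.2 ∈ X s})) :
    ∃ s : Fin n, ∃ y ∈ X s, obj w (x s) < obj w y := by
  by_contra hcon
  push_neg at hcon
  obtain ⟨k, c, hk, hck, hA⟩ := hcyc
  have key : ∀ l < k, w (c (l + 1)) < w (c l) := by
    intro l hl
    have := hA l hl
    rw [Set.mem_iUnion] at this
    obtain ⟨s, hne, hx⟩ := this
    have hle := hcon s _ hx
    rw [obj_move] at hle
    have : w (c (l + 1)) ≤ w (c l) := by linarith
    exact lt_of_le_of_ne this fun he => hne (hw he).symm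
  have mono : ∀ l, 0 < l → l ≤ k → w (c l) < w (c 0) := by
    intro l
    induction l with
    | zero => intro h; exact absurd h (lt_irrefl 0)
    | succ m ih =>
      intro _ hle
      rcases Nat.eq_zero_or_pos m with hm | hm
      · subst hm; exact key 0 (by omega)
      · exact lt_trans (key m (by omega)) (ih hm (by omega))
  have := mono k hk le_rfl
  rw [hck] at this
  exact lt_irrefl _ this
end
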